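/- arXiv:1511.02374 — 2 statements merged into one kernel-verified Lean document; each statement's English description precedes it below -/
import Mathlib

section
/- Let A be an S-ring over a finite abelian group G of order n, X a basic set of A, and m an integer coprime to n. Then X^{(m)} = {x^m : x ∈ X} is also a basic set of A. -/
open scoped BigOperators Pointwise Classical

noncomputable section

/-- The group-ring element `X̄ = Σ_{x∈X} x` in `ℤG`. -/
def ind {G : Type*} [Group G] (X : Finset G) : MonoidAlgebra ℤ G :=
  ∑ x ∈ X, MonoidAlgebra.single x 1

/-- The ℤ-span of the class sums of the members of `S`. -/
def spanA {G : Type*} [Group G] (S : Finset (Finset G)) :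
    Submodule ℤ (MonoidAlgebra ℤ G) :=
  Submodule.span ℤ (ind '' (S : Set (Finset G)))

/-- `S` is the partition of basic sets of an S-ring over `G`. -/
structure IsSRing {G : Type*} [Group G] (S : Finset (Finset G)) : Prop where
  cover : ∀ g : G, ∃ X ∈ S, g ∈ X
  disj : ∀ X ∈ S, ∀ Y ∈ S, X ≠ Y → Disjoint X Y
  nonempty : ∀ X ∈ S, X.Nonempty
  one_mem : ({1} : Finset G) ∈ S
  inv_mem : ∀ X ∈ S, X.image (·⁻¹) ∈ S
  mul_closed : ∀ a ∈ spanA S, ∀ b ∈ spanA S, a * b ∈ spanA S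

/-- `X` is an `A`-set: its class sum lies in the span of the basic class sums. -/
def IsASet {G : Type*} [Group G] (S : Finset (Finset G)) (X : Finset G) : Prop :=
  ind X ∈ spanA S

/-- The finset underlying a subgroup of a finite group. -/
def subgroupFinset {G : Type*} [Group G] [Fintype G] (H : Subgroup G) : Finset G :=
  Finset.univ.filter (· ∈ H)

/-- `H` is an `A`-subgroup. -/
def IsASubgroup {G : Type*} [Group G] [Fintype G] (S : Finset (Finset G))
    (H : Subgroup G) : Prop :=
  IsASet S (subgroupFinset H)

/-- The radical `rad(X) = {g : gX = Xg = X}` as a subgroup. -/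
def radSubgroup {G : Type*} [Group G] (X : Finset G) : Subgroup G where
  carrier := {g : G | X.image (g * ·) = X ∧ X.image (· * g) = X}
  one_mem' := by
    constructor <;> · simp only [one_mul, mul_one]; exact Finset.image_id
  mul_mem' := by
    rintro a b ⟨ha1, ha2⟩ ⟨hb1, hb2⟩
    constructor
    · have : X.image (a * b * ·) = (X.image (b * ·)).image (a * ·) := by
        rw [Finset.image_image]
        exact Finset.image_congr (fun x _ => by simp [mul_assoc])
      rw [this, hb1, ha1]
    · have : X.image (· * (a * b)) = (X.image (· * a)).image (· * b) := by
        rw [Finset.image_image]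
        exact Finset.image_congr (fun x _ => by simp [mul_assoc])
      rw [this, ha2, hb2]
  inv_mem' := by
    rintro a ⟨ha1, ha2⟩
    constructor
    · have := congrArg (Finset.image (a⁻¹ * ·)) ha1
      rw [Finset.image_image] at this
      have h2 : X.image ((a⁻¹ * ·) ∘ (a * ·)) = X := by
        rw [show ((a⁻¹ * ·) ∘ (a * ·)) = id by funext x; simp, Finset.image_id]
      rw [← this, h2]
    · have := congrArg (Finset.image (· * a⁻¹)) ha2
      rw [Finset.image_image] at this
      have h2 : X.image ((· * a⁻¹) ∘ (· * a)) = X := by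
        rw [show ((· * a⁻¹) ∘ (· * a)) = id by funext x; simp, Finset.image_id]
      rw [← this, h2]

end

/-!
An element of the span of the basic class sums has constant coefficients on each basic set, so
`Y` is an `A`-set iff it is a union of basic sets. For a prime `p ∤ |G|`, the Frobenius
endomorphism of the commutative ring `𝔽_p G` gives `Ȳ ^ p ≡ Y^{(p)}‾ (mod p)`, and
`x ↦ x ^ p` is injective; since `Ȳ ^ p` lies in the span, `Y^{(p)}` is again a union of basic
sets. Composing, the same holds for every `m` coprime to `|G|`. If `m u ≡ 1 (mod |G|)` and `T`
is a basic set inside `X^{(m)}`, then `T^{(u)}` is an `A`-set inside the basic set `X`, hence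
equal to it, and `X^{(m)} = T`.
-/

section Group

variable {G : Type*} [Group G] {S : Finset (Finset G)}

lemma coeff_ind (X : Finset G) (g : G) : (ind X).coeff g = if g ∈ X then 1 else 0 := by
  simp [ind, MonoidAlgebra.coeff_sum, MonoidAlgebra.coeff_single, Finsupp.single_apply]

lemma ind_singleton_one : ind ({1} : Finset G) = 1 := by
  simp [ind, MonoidAlgebra.one_def]

lemma isASet_of_mem {X : Finset G} (hX : X ∈ S) : IsASet S X :=
  Submodule.subset_span ⟨X, hX, rfl⟩

namespace IsSRing

lemma pow_mem_spanA (hS : IsSRing S) {a : MonoidAlgebra ℤ G} (ha : a ∈ spanA S) (k : ℕ) :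
    a ^ k ∈ spanA S := by
  induction k with
  | zero => simpa [IsASet, ind_singleton_one] using isASet_of_mem hS.one_mem
  | succ k ih => simpa [pow_succ] using hS.mul_closed _ ih _ ha

lemma coeff_eq_of_mem_spanA (hS : IsSRing S) {a : MonoidAlgebra ℤ G} (ha : a ∈ spanA S)
    {T : Finset G} (hT : T ∈ S) {g g' : G} (hg : g ∈ T) (hg' : g' ∈ T) :
    a.coeff g = a.coeff g' := by
  induction ha using Submodule.span_induction with
  | mem _ h =>
    obtain ⟨U, hU, rfl⟩ := h
    have hmem : g ∈ U ↔ g' ∈ U := by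
      by_cases hUT : U = T
      · subst hUT; simp [hg, hg']
      · have hdisj := Finset.disjoint_left.mp (hS.disj U hU T hT hUT)
        exact iff_of_false (fun h => hdisj h hg) (fun h => hdisj h hg')
    simp [coeff_ind, hmem]
  | zero => simp
  | add a b _ _ ha hb => simp [MonoidAlgebra.coeff_add, ha, hb]
  | smul c a _ ha => simp only [MonoidAlgebra.coeff_smul, Finsupp.smul_apply, ha]

lemma isASet_iff (hS : IsSRing S) {Y : Finset G} :
    IsASet S Y ↔ ∀ T ∈ S, ∀ g ∈ T, g ∈ Y → T ⊆ Y := by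
  refine ⟨fun hY T hT g hg hgY g' hg' => ?_, fun hY => ?_⟩
  · simpa [coeff_ind, hgY, eq_comm] using hS.coeff_eq_of_mem_spanA hY hT hg hg'
  · have hunion : Y = (S.filter (· ⊆ Y)).biUnion id := by
      ext g
      simp only [Finset.mem_biUnion, Finset.mem_filter, id]
      refine ⟨fun hgY => ?_, fun ⟨T, ⟨_, hTY⟩, hgT⟩ => hTY hgT⟩
      obtain ⟨T, hT, hgT⟩ := hS.cover g
      exact ⟨T, ⟨hT, hY T hT g hgT hgY⟩, hgT⟩
    have hdisj : (↑(S.filter (· ⊆ Y)) : Set (Finset G)).PairwiseDisjoint id :=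
      fun T hT U hU hTU => hS.disj T (Finset.mem_filter.mp hT).1 U (Finset.mem_filter.mp hU).1 hTU
    rw [IsASet, hunion, ind, Finset.sum_biUnion hdisj]
    exact Submodule.sum_mem _ fun T hT => isASet_of_mem (Finset.mem_filter.mp hT).1

lemma eq_of_isASet_of_subset (hS : IsSRing S) {X Y : Finset G} (hX : X ∈ S) (hY : IsASet S Y)
    (hYX : Y ⊆ X) (hne : Y.Nonempty) : Y = X := by
  obtain ⟨y, hy⟩ := hne
  exact hYX.antisymm (hS.isASet_iff.mp hY X hX y (hYX hy) hy)

end IsSRing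

lemma image_zpow_image_zpow [Fintype G] {a b : ℤ} (hab : a * b ≡ 1 [ZMOD Fintype.card G])
    (Y : Finset G) : (Y.image (· ^ a)).image (· ^ b) = Y := by
  rw [Finset.image_image]
  refine (Finset.image_congr fun x _ => ?_).trans Finset.image_id
  have hdvd : (orderOf x : ℤ) ∣ Fintype.card G := Int.natCast_dvd_natCast.mpr orderOf_dvd_card
  simpa [← zpow_mul] using zpow_eq_zpow_iff_modEq.mpr (hab.of_dvd hdvd)

end Group

section CommGroup

variable {G : Type*} [CommGroup G] {S : Finset (Finset G)}

/-- The Frobenius congruence `Ȳ ^ p ≡ Y^{(p)}‾ (mod p)`, read in `(ZMod p)[G]`. -/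
lemma mapRingHom_ind_pow (p : ℕ) [Fact p.Prime] {Y : Finset G}
    (hinj : Set.InjOn (· ^ p) (Y : Set G)) :
    MonoidAlgebra.mapRingHom G (Int.castRingHom (ZMod p)) (ind Y ^ p) =
      MonoidAlgebra.mapRingHom G (Int.castRingHom (ZMod p)) (ind (Y.image (· ^ p))) := by
  have : CharP (MonoidAlgebra (ZMod p) G) p :=
    (Algebra.charP_iff (ZMod p) (MonoidAlgebra (ZMod p) G) p).mp inferInstance
  simp only [map_pow, ind, map_sum, MonoidAlgebra.mapRingHom_single, map_one, sum_pow_char,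
    MonoidAlgebra.single_pow, one_pow, Finset.sum_image hinj]

namespace IsSRing

variable [Fintype G]

lemma isASet_image_pow_of_prime (hS : IsSRing S) {p : ℕ} (hp : p.Prime)
    (hpG : p.Coprime (Fintype.card G)) {Y : Finset G} (hY : IsASet S Y) :
    IsASet S (Y.image (· ^ p)) := by
  have : Fact p.Prime := ⟨hp⟩
  have hinj : Function.Injective (· ^ p : G → G) :=
    (powCoprime (by rwa [Nat.card_eq_fintype_card, Nat.coprime_comm])).injective
  have hcoeff (g : G) :
      (((ind Y ^ p).coeff g : ℤ) : ZMod p) = if g ∈ Y.image (· ^ p) then 1 else 0 := by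
    have h := congrArg (·.coeff g) (mapRingHom_ind_pow p (Y := Y) hinj.injOn)
    simp only [MonoidAlgebra.coeff_mapRingHom] at h
    simpa [coeff_ind, apply_ite] using h
  refine hS.isASet_iff.mpr fun T hT g hg hgY g' hg' => ?_
  have hconst := congrArg (fun c : ℤ => (c : ZMod p))
    (hS.coeff_eq_of_mem_spanA (hS.pow_mem_spanA hY p) hT hg hg')
  by_contra hg'Y
  simp [hcoeff, hgY, hg'Y] at hconst

lemma isASet_image_pow_of_coprime (hS : IsSRing S) {k : ℕ} (hk : k.Coprime (Fintype.card G))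
    {Y : Finset G} (hY : IsASet S Y) : IsASet S (Y.image (· ^ k)) := by
  induction k using Nat.recOnMul generalizing Y with
  | zero =>
    obtain rfl | hne := Y.eq_empty_or_nonempty
    · simp [IsASet, ind]
    · simpa [Finset.image_const hne] using isASet_of_mem hS.one_mem
  | one => simpa using hY
  | prime p hp => exact hS.isASet_image_pow_of_prime hp hk hY
  | mul a b iha ihb =>
    rw [Nat.coprime_mul_iff_left] at hk
    have : Y.image (· ^ (a * b)) = (Y.image (· ^ a)).image (· ^ b) := by
      simp [Finset.image_image, Function.comp_def, pow_mul]
    rw [this]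
    exact ihb hk.2 (iha hk.1 hY)

lemma isASet_image_zpow_of_coprime (hS : IsSRing S) {m : ℤ} (hm : m.gcd (Fintype.card G) = 1)
    {Y : Finset G} (hY : IsASet S Y) : IsASet S (Y.image (· ^ m)) := by
  set k := (m % Fintype.card G).toNat
  have hk : (k : ℤ) = m % Fintype.card G := Int.toNat_of_nonneg (Int.emod_nonneg _ (by simp))
  have hpow : Y.image (· ^ m) = Y.image (· ^ k) :=
    Finset.image_congr fun x _ => by simp [← zpow_natCast, hk, zpow_mod_card]
  have hkG : k.Coprime (Fintype.card G) := by
    rw [← Int.gcd_emod, ← hk, Int.gcd_natCast_natCast] at hm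
    exact hm
  rw [hpow]
  exact hS.isASet_image_pow_of_coprime hkG hY

end IsSRing

end CommGroup

/-- Schur's multiplier theorem: over a finite abelian group of
order `n`, if `X` is a basic set and `gcd(m, n) = 1`, then `X^{(m)}` is basic. -/
theorem stmt5 {G : Type*} [CommGroup G] [Fintype G] (S : Finset (Finset G))
    (hS : IsSRing S) (X : Finset G) (hX : X ∈ S) (m : ℤ)
    (hm : Int.gcd m (Fintype.card G) = 1) :
    X.image (· ^ m) ∈ S := by
  obtain ⟨u, v, huv⟩ := Int.isCoprime_iff_gcd_eq_one.mpr hm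
  have hmu : m * u ≡ 1 [ZMOD Fintype.card G] :=
    Int.modEq_iff_dvd.mpr ⟨v, by linear_combination -huv⟩
  have hu : u.gcd (Fintype.card G) = 1 :=
    Int.isCoprime_iff_gcd_eq_one.mp ⟨m, v, by linear_combination huv⟩
  obtain ⟨x, hx⟩ := hS.nonempty X hX
  obtain ⟨T, hT, hxT⟩ := hS.cover (x ^ m)
  have hTXm : T ⊆ X.image (· ^ m) :=
    hS.isASet_iff.mp (hS.isASet_image_zpow_of_coprime hm (isASet_of_mem hX)) T hT _ hxT
      (Finset.mem_image_of_mem _ hx)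
  have hTu : T.image (· ^ u) = X := by
    refine hS.eq_of_isASet_of_subset hX (hS.isASet_image_zpow_of_coprime hu (isASet_of_mem hT)) ?_
      ((hS.nonempty T hT).image _)
    simpa [image_zpow_image_zpow hmu] using Finset.image_subset_image (f := (· ^ u)) hTXm
  rwa [← hTu, image_zpow_image_zpow (by rwa [mul_comm])]
end

section
/- Let A be an S-ring over a finite group G and X a basic set of A. Suppose H ≤ G is a subgroup with X ∩ H ≠ ∅, X \ H ≠ ∅, and H ≤ rad(X \ H). Then X = ⟨X⟩ \ rad(X), and rad(X) ≤ H ∩ ⟨X⟩. -/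
open scoped BigOperators Pointwise Classical

/-!
The coefficient `c(g) = |{x ∈ X : x⁻¹g ∈ X}|` of `X̄²` at `g` is constant on the basic set `X`.
Split `X = Z ∪ Y` with `Z = X ∩ H` and `Y = X \ H`, so that `HY = YH = Y`. Comparing `c` at a
point of `Y` with `c` at a point of `Z` first shows `X = X⁻¹`, and then forces `Y⁻¹Y ⊆ X ∪ H` and
`Z(H \ X) ⊆ Z`. The first makes `X ∪ H` a subgroup, so `⟨X⟩ ⊆ X ∪ H`; the second puts `H \ X`
into `rad(X)`. Conversely `rad(X)` misses `X` because `1 ∉ X`, and lies in `H` because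
`r⁻¹z ∈ Y` for some `z ∈ Z` would give `r⁻¹ ∈ YH ⊆ X`.
-/

open Finset

section StructConst

variable {G : Type*} [Group G]

noncomputable def structConst (A B : Finset G) (g : G) : ℕ := #{x ∈ A | x⁻¹ * g ∈ B}

lemma ind_coeff (A : Finset G) (g : G) : (ind A).coeff g = if g ∈ A then 1 else 0 := by
  simp [ind, MonoidAlgebra.coeff_sum, MonoidAlgebra.coeff_single, Finsupp.single_apply]

lemma ind_mul_ind_coeff (A B : Finset G) (g : G) :
    (ind A * ind B).coeff g = structConst A B g := by
  rw [ind, sum_mul, MonoidAlgebra.coeff_sum, sum_apply']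
  simp [MonoidAlgebra.coeff_single_mul_apply, ind_coeff, structConst]

lemma structConst_union_left {A A' : Finset G} (h : Disjoint A A') (B : Finset G) (g : G) :
    structConst (A ∪ A') B g = structConst A B g + structConst A' B g := by
  rw [structConst, filter_union, card_union_of_disjoint (disjoint_filter_filter h)]
  rfl

lemma structConst_union_right (A : Finset G) {B B' : Finset G} (h : Disjoint B B') (g : G) :
    structConst A (B ∪ B') g = structConst A B g + structConst A B' g := by
  simp only [structConst, mem_union, filter_or]
  exact card_union_of_disjoint (disjoint_filter.mpr fun x _ hB hB' => disjoint_left.mp h hB hB')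

lemma structConst_le_card_left (A B : Finset G) (g : G) : structConst A B g ≤ #A :=
  card_filter_le _ _

lemma structConst_eq_card_left_iff {A B : Finset G} {g : G} :
    structConst A B g = #A ↔ ∀ a ∈ A, a⁻¹ * g ∈ B :=
  card_filter_eq_iff

lemma structConst_eq_zero_iff {A B : Finset G} {g : G} :
    structConst A B g = 0 ↔ ∀ a ∈ A, a⁻¹ * g ∉ B :=
  card_filter_eq_zero_iff

lemma structConst_eq_card_inter_image (A B : Finset G) (g : G) :
    structConst A B g = #(A ∩ B.image fun b => g * b⁻¹) := by
  rw [structConst]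
  congr 1
  ext x
  simp only [mem_filter, mem_inter, mem_image]
  constructor
  · rintro ⟨hx, hb⟩
    exact ⟨hx, _, hb, by group⟩
  · rintro ⟨hx, b, hb, rfl⟩
    exact ⟨hx, by simpa using hb⟩

lemma card_image_mul_inv (B : Finset G) (g : G) : #(B.image fun b => g * b⁻¹) = #B :=
  card_image_of_injective _ fun _ _ h => inv_injective (mul_left_cancel h)

lemma structConst_le_card_right (A B : Finset G) (g : G) : structConst A B g ≤ #B := by
  rw [structConst_eq_card_inter_image, ← card_image_mul_inv B g]
  exact card_le_card inter_subset_right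

lemma structConst_eq_card_right_iff {A B : Finset G} {g : G} :
    structConst A B g = #B ↔ ∀ b ∈ B, g * b⁻¹ ∈ A := by
  rw [structConst_eq_card_inter_image, ← card_image_mul_inv B g, ← image_subset_iff,
    ← inter_eq_right]
  exact ⟨eq_of_subset_of_card_le inter_subset_right ∘ ge_of_eq, congrArg card⟩

end StructConst

namespace IsSRing

variable {G : Type*} [Group G] {S : Finset (Finset G)}

lemma coeff_eq_of_mem_spanA_s10 (hS : IsSRing S) {a : MonoidAlgebra ℤ G} (ha : a ∈ spanA S)
    {W : Finset G} (hW : W ∈ S) {w w' : G} (hw : w ∈ W) (hw' : w' ∈ W) :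
    a.coeff w = a.coeff w' := by
  induction ha using Submodule.span_induction with
  | mem _ hb =>
    obtain ⟨W', hW', rfl⟩ := hb
    have : w ∈ W' ↔ w' ∈ W' := by
      by_cases hWW' : W = W'
      · subst hWW'
        exact iff_of_true hw hw'
      · have hd := disjoint_left.mp (hS.disj W hW W' hW' hWW')
        exact iff_of_false (hd hw) (hd hw')
    simp only [ind_coeff, this]
  | zero => rfl
  | add _ _ _ _ hx hy => simp only [MonoidAlgebra.coeff_add, Finsupp.add_apply, hx, hy]
  | smul _ _ _ hx => simp only [MonoidAlgebra.coeff_smul_apply, hx]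

lemma structConst_eq (hS : IsSRing S) {A B W : Finset G} (hA : A ∈ S) (hB : B ∈ S)
    (hW : W ∈ S) {w w' : G} (hw : w ∈ W) (hw' : w' ∈ W) :
    structConst A B w = structConst A B w' := by
  have hAB := hS.mul_closed _ (Submodule.subset_span ⟨A, hA, rfl⟩) _
    (Submodule.subset_span ⟨B, hB, rfl⟩)
  exact_mod_cast (ind_mul_ind_coeff A B w).symm.trans
    ((hS.coeff_eq_of_mem_spanA_s10 hAB hW hw hw').trans (ind_mul_ind_coeff A B w'))

lemma one_notMem (hS : IsSRing S) {X : Finset G} (hX : X ∈ S) (hne : X ≠ {1}) : (1 : G) ∉ X :=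
  fun h1 => disjoint_left.mp (hS.disj X hX {1} hS.one_mem hne) h1 (mem_singleton_self 1)

end IsSRing

section radSubgroup

variable {G : Type*} [Group G] {X : Finset G} {g x : G}

lemma mul_mem_of_mem_radSubgroup_left (hg : g ∈ radSubgroup X) (hx : x ∈ X) : g * x ∈ X :=
  hg.1 ▸ mem_image_of_mem (g * ·) hx

lemma mul_mem_of_mem_radSubgroup_right (hg : g ∈ radSubgroup X) (hx : x ∈ X) : x * g ∈ X :=
  hg.2 ▸ mem_image_of_mem (· * g) hx

lemma mem_radSubgroup_of_forall_mul_mem (hl : ∀ x ∈ X, g * x ∈ X) (hr : ∀ x ∈ X, x * g ∈ X) :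
    g ∈ radSubgroup X :=
  ⟨eq_of_subset_of_card_le (image_subset_iff.mpr hl)
      (card_image_of_injective X (mul_right_injective g)).ge,
    eq_of_subset_of_card_le (image_subset_iff.mpr hr)
      (card_image_of_injective X (mul_left_injective g)).ge⟩

lemma notMem_of_mem_radSubgroup (h1 : (1 : G) ∉ X) (hg : g ∈ radSubgroup X) : g ∉ X :=
  fun hgX => h1 (inv_mul_cancel g ▸ mul_mem_of_mem_radSubgroup_left (inv_mem hg) hgX)

lemma mem_closure_of_mem_radSubgroup (hx : x ∈ X) (hg : g ∈ radSubgroup X) :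
    g ∈ Subgroup.closure (X : Set G) := by
  have hgx : g * x ∈ Subgroup.closure (X : Set G) :=
    Subgroup.subset_closure (mul_mem_of_mem_radSubgroup_left hg hx)
  simpa using mul_mem hgx (inv_mem (Subgroup.subset_closure hx))

end radSubgroup

lemma mem_subgroupFinset {G : Type*} [Group G] [Fintype G] {H : Subgroup G} {g : G} :
    g ∈ subgroupFinset H ↔ g ∈ H := by
  simp [subgroupFinset]

section Separating

variable {G : Type*} [Group G] {H : Subgroup G} {X : Finset G}

lemma structConst_self_of_notMem (hH : ∀ h ∈ H, h ∈ radSubgroup (X.filter (· ∉ H))) {y : G}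
    (hy : y ∈ X.filter (· ∉ H)) :
    structConst X X y =
      2 * #(X.filter (· ∈ H)) + structConst (X.filter (· ∉ H)) (X.filter (· ∉ H)) y := by
  set Y := X.filter (· ∉ H)
  set Z := X.filter (· ∈ H)
  have hZY : Disjoint Z Y := disjoint_filter_filter_not X X (· ∈ H)
  have hZ : structConst Z X y = #Z := structConst_eq_card_left_iff.mpr fun z hz =>
    mem_of_mem_filter _ <|
      mul_mem_of_mem_radSubgroup_left (hH _ (H.inv_mem (mem_filter.mp hz).2)) hy
  have hYZ : structConst Y Z y = #Z := structConst_eq_card_right_iff.mpr fun z hz =>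
    mul_mem_of_mem_radSubgroup_right (hH _ (H.inv_mem (mem_filter.mp hz).2)) hy
  have hX : Z ∪ Y = X := filter_union_filter_not_eq _ X
  calc structConst X X y = structConst (Z ∪ Y) X y := by rw [hX]
    _ = structConst Z X y + structConst Y (Z ∪ Y) y := by rw [structConst_union_left hZY, hX]
    _ = 2 * #Z + structConst Y Y y := by
        rw [structConst_union_right _ hZY, hZ, hYZ]
        ring

lemma structConst_union_subgroupFinset [Fintype G]
    (hH : ∀ h ∈ H, h ∈ radSubgroup (X.filter (· ∉ H))) {y : G} (hy : y ∈ X.filter (· ∉ H)) :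
    structConst (X.filter (· ∉ H)) (X.filter (· ∉ H) ∪ subgroupFinset H) y =
      structConst (X.filter (· ∉ H)) (X.filter (· ∉ H)) y + #(subgroupFinset H) := by
  have hdisj : Disjoint (X.filter (· ∉ H)) (subgroupFinset H) := disjoint_left.mpr
    fun _ hx hxH => (mem_filter.mp hx).2 (mem_subgroupFinset.mp hxH)
  rw [structConst_union_right _ hdisj, structConst_eq_card_right_iff.mpr fun h hh =>
    mul_mem_of_mem_radSubgroup_right (hH _ (H.inv_mem (mem_subgroupFinset.mp hh))) hy]

lemma structConst_self_of_mem {z : G} (hz : z ∈ H) :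
    structConst X X z =
      structConst (X.filter (· ∈ H)) (X.filter (· ∈ H)) z + structConst (X.filter (· ∉ H)) X z := by
  set Y := X.filter (· ∉ H)
  set Z := X.filter (· ∈ H)
  have hZY : Disjoint Z Y := disjoint_filter_filter_not X X (· ∈ H)
  have hX : Z ∪ Y = X := filter_union_filter_not_eq _ X
  have hZY0 : structConst Z Y z = 0 := structConst_eq_zero_iff.mpr fun a ha haz =>
    (mem_filter.mp haz).2 (H.mul_mem (H.inv_mem (mem_filter.mp ha).2) hz)
  calc structConst X X z = structConst (Z ∪ Y) (Z ∪ Y) z := by rw [hX]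
    _ = structConst Z Z z + structConst Y X z := by
        rw [structConst_union_left hZY, structConst_union_right _ hZY, hZY0, add_zero, hX]

lemma structConst_add_structConst_sdiff [Fintype G] {z : G} (hz : z ∈ H) :
    structConst (X.filter (· ∈ H)) (X.filter (· ∈ H)) z +
      structConst (X.filter (· ∈ H)) (subgroupFinset H \ X.filter (· ∈ H)) z =
      #(X.filter (· ∈ H)) := by
  have hsub : X.filter (· ∈ H) ⊆ subgroupFinset H := fun x hx =>
    mem_subgroupFinset.mpr (mem_filter.mp hx).2
  rw [← structConst_union_right _ disjoint_sdiff, union_sdiff_of_subset hsub,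
    structConst_eq_card_left_iff]
  exact fun a ha => mem_subgroupFinset.mpr (H.mul_mem (H.inv_mem (mem_filter.mp ha).2) hz)

lemma structConst_filter_notMem_of_mem (hH : ∀ h ∈ H, h ∈ radSubgroup (X.filter (· ∉ H)))
    (hinv : ∀ x ∈ X, x⁻¹ ∈ X) {z : G} (hz : z ∈ H) :
    structConst (X.filter (· ∉ H)) X z = #(X.filter (· ∉ H)) := by
  refine structConst_eq_card_left_iff.mpr fun a ha => ?_
  have ha' : a⁻¹ ∈ X.filter (· ∉ H) := by
    obtain ⟨haX, haH⟩ := mem_filter.mp ha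
    exact mem_filter.mpr ⟨hinv a haX, fun h => haH (by simpa using H.inv_mem h)⟩
  exact mem_of_mem_filter _ (mul_mem_of_mem_radSubgroup_right (hH z hz) ha')

end Separating

structure IsSeparatingGroup {G : Type*} [Group G] (S : Finset (Finset G)) (X : Finset G)
    (H : Subgroup G) : Prop where
  isSRing : IsSRing S
  mem : X ∈ S
  exists_mem : ∃ x ∈ X, x ∈ H
  exists_notMem : ∃ x ∈ X, x ∉ H
  le_radSubgroup : ∀ h ∈ H, h ∈ radSubgroup (X.filter (· ∉ H))

namespace IsSeparatingGroup

variable {G : Type*} [Group G] {S : Finset (Finset G)} {X : Finset G} {H : Subgroup G}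

lemma one_notMem (hs : IsSeparatingGroup S X H) : (1 : G) ∉ X := by
  obtain ⟨y, hyX, hyH⟩ := hs.exists_notMem
  refine hs.isSRing.one_notMem hs.mem fun hX1 => hyH ?_
  rw [hX1, mem_singleton] at hyX
  exact hyX ▸ H.one_mem

/-- If `X ∩ X⁻¹ = ∅`, no element of `X \ H` contributes to the structure constant at `z ∈ X ∩ H`,
so it is at most `|X ∩ H|`, whereas at `y ∈ X \ H` it is at least `2 |X ∩ H|`. -/
lemma inv_mem (hs : IsSeparatingGroup S X H) : ∀ x ∈ X, x⁻¹ ∈ X := by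
  obtain ⟨z, hzX, hzH⟩ := hs.exists_mem
  obtain ⟨y, hyX, hyH⟩ := hs.exists_notMem
  by_contra hcon
  have hdisj : ∀ x ∈ X, x⁻¹ ∉ X := by
    have hne : X.image (·⁻¹) ≠ X := fun he => hcon fun x hx => he ▸ mem_image_of_mem _ hx
    have hd := hs.isSRing.disj _ (hs.isSRing.inv_mem X hs.mem) X hs.mem hne
    exact fun x hx => disjoint_left.mp hd (mem_image_of_mem _ hx)
  have hYz : structConst (X.filter (· ∉ H)) X z = 0 :=
    structConst_eq_zero_iff.mpr fun a ha haz => by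
      obtain ⟨haX, haH⟩ := mem_filter.mp ha
      have hazY : a⁻¹ * z ∈ X.filter (· ∉ H) :=
        mem_filter.mpr ⟨haz, fun h => haH (by simpa using H.mul_mem h (H.inv_mem hzH))⟩
      have hainv := mul_mem_of_mem_radSubgroup_right (hs.le_radSubgroup _ (H.inv_mem hzH)) hazY
      rw [mul_inv_cancel_right] at hainv
      exact hdisj a haX (mem_of_mem_filter _ hainv)
  have hcz := structConst_self_of_mem (X := X) hzH
  have hcy := structConst_self_of_notMem hs.le_radSubgroup (mem_filter.mpr ⟨hyX, hyH⟩)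
  have heq := hs.isSRing.structConst_eq hs.mem hs.mem hs.mem hyX hzX
  have hle := structConst_le_card_left (X.filter (· ∈ H)) (X.filter (· ∈ H)) z
  have hpos : 0 < #(X.filter (· ∈ H)) := card_pos.mpr ⟨z, mem_filter.mpr ⟨hzX, hzH⟩⟩
  omega

/-- Comparing the structure constants at `y ∈ X \ H` and `z ∈ X ∩ H` forces equality in the
two counting bounds `c(y) ≤ 2|X ∩ H| + |X \ H| - |H|` and `c(z) ≥ 2|X ∩ H| + |X \ H| - |H|`. -/
lemma structConst_eq_card [Fintype G] (hs : IsSeparatingGroup S X H) {y z : G}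
    (hy : y ∈ X.filter (· ∉ H)) (hzX : z ∈ X) (hzH : z ∈ H) :
    structConst (X.filter (· ∉ H)) (X.filter (· ∉ H) ∪ subgroupFinset H) y =
        #(X.filter (· ∉ H)) ∧
      structConst (X.filter (· ∈ H)) (subgroupFinset H \ X.filter (· ∈ H)) z =
        #(subgroupFinset H \ X.filter (· ∈ H)) := by
  have hcy := structConst_self_of_notMem hs.le_radSubgroup hy
  have hYH := structConst_union_subgroupFinset hs.le_radSubgroup hy
  have hYH_le := structConst_le_card_left (X.filter (· ∉ H))
    (X.filter (· ∉ H) ∪ subgroupFinset H) y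
  have hcz := structConst_self_of_mem (X := X) hzH
  have hYz := structConst_filter_notMem_of_mem hs.le_radSubgroup hs.inv_mem hzH
  have hZz := structConst_add_structConst_sdiff (X := X) hzH
  have hZz_le := structConst_le_card_right (X.filter (· ∈ H))
    (subgroupFinset H \ X.filter (· ∈ H)) z
  have hcard := card_sdiff_add_card_eq_card (s := X.filter (· ∈ H)) (t := subgroupFinset H)
    fun x hx => mem_subgroupFinset.mpr (mem_filter.mp hx).2
  have heq := hs.isSRing.structConst_eq hs.mem hs.mem hs.mem (mem_of_mem_filter _ hy) hzX
  omega

lemma mul_mem_or_mem [Fintype G] (hs : IsSeparatingGroup S X H) {a b : G}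
    (ha : a ∈ X.filter (· ∉ H)) (hb : b ∈ X.filter (· ∉ H)) : a * b ∈ X ∨ a * b ∈ H := by
  obtain ⟨z, hzX, hzH⟩ := hs.exists_mem
  have ha' : a⁻¹ ∈ X.filter (· ∉ H) := by
    obtain ⟨haX, haH⟩ := mem_filter.mp ha
    exact mem_filter.mpr ⟨hs.inv_mem a haX, fun h => haH (by simpa using H.inv_mem h)⟩
  have hab := structConst_eq_card_left_iff.mp (hs.structConst_eq_card hb hzX hzH).1 _ ha'
  rw [inv_inv] at hab
  exact (mem_union.mp hab).imp (mem_of_mem_filter _) mem_subgroupFinset.mp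

lemma mul_inv_mem [Fintype G] (hs : IsSeparatingGroup S X H) {z d : G} (hzX : z ∈ X)
    (hzH : z ∈ H) (hdH : d ∈ H) (hdX : d ∉ X) : z * d⁻¹ ∈ X := by
  obtain ⟨y, hyX, hyH⟩ := hs.exists_notMem
  refine mem_of_mem_filter _ <| structConst_eq_card_right_iff.mp
    (hs.structConst_eq_card (mem_filter.mpr ⟨hyX, hyH⟩) hzX hzH).2 d ?_
  exact mem_sdiff.mpr ⟨mem_subgroupFinset.mpr hdH, fun h => hdX (mem_of_mem_filter _ h)⟩

lemma mem_radSubgroup [Fintype G] (hs : IsSeparatingGroup S X H) {d : G} (hdH : d ∈ H)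
    (hdX : d ∉ X) : d ∈ radSubgroup X := by
  have hdX' : d⁻¹ ∉ X := fun h => hdX (by simpa using hs.inv_mem _ h)
  refine mem_radSubgroup_of_forall_mul_mem (fun x hx => ?_) (fun x hx => ?_)
  · by_cases hxH : x ∈ H
    · simpa using hs.inv_mem _ (hs.mul_inv_mem (hs.inv_mem x hx) (H.inv_mem hxH) hdH hdX)
    · exact mem_of_mem_filter _
        (mul_mem_of_mem_radSubgroup_left (hs.le_radSubgroup d hdH) (mem_filter.mpr ⟨hx, hxH⟩))
  · by_cases hxH : x ∈ H
    · simpa using hs.mul_inv_mem hx hxH (H.inv_mem hdH) hdX'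
    · exact mem_of_mem_filter _
        (mul_mem_of_mem_radSubgroup_right (hs.le_radSubgroup d hdH) (mem_filter.mpr ⟨hx, hxH⟩))

lemma mem_or_mem_of_mem_closure [Fintype G] (hs : IsSeparatingGroup S X H) {g : G}
    (hg : g ∈ Subgroup.closure (X : Set G)) : g ∈ X ∨ g ∈ H := by
  have hsplit : ∀ {x : G}, x ∈ X ∨ x ∈ H → x ∈ X.filter (· ∉ H) ∨ x ∈ H := fun {x} hx => by
    by_cases hxH : x ∈ H
    · exact Or.inr hxH
    · exact Or.inl (mem_filter.mpr ⟨hx.resolve_right hxH, hxH⟩)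
  induction hg using Subgroup.closure_induction with
  | mem x hx => exact Or.inl hx
  | one => exact Or.inr H.one_mem
  | mul x y _ _ hx hy =>
    rcases hsplit hx with hx | hx <;> rcases hsplit hy with hy | hy
    · exact hs.mul_mem_or_mem hx hy
    · exact Or.inl (mem_of_mem_filter _
        (mul_mem_of_mem_radSubgroup_right (hs.le_radSubgroup y hy) hx))
    · exact Or.inl (mem_of_mem_filter _
        (mul_mem_of_mem_radSubgroup_left (hs.le_radSubgroup x hx) hy))
    · exact Or.inr (H.mul_mem hx hy)
  | inv x _ hx => exact hx.imp (hs.inv_mem x) H.inv_mem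

lemma radSubgroup_le (hs : IsSeparatingGroup S X H) : radSubgroup X ≤ H := by
  intro r hr
  obtain ⟨z, hzX, hzH⟩ := hs.exists_mem
  have hrz : r⁻¹ * z ∈ X := mul_mem_of_mem_radSubgroup_left ((radSubgroup X).inv_mem hr) hzX
  by_contra hrH
  have hrzH : r⁻¹ * z ∉ H := fun h => hrH (by simpa using H.mul_mem h (H.inv_mem hzH))
  have hr' := mul_mem_of_mem_radSubgroup_right (hs.le_radSubgroup _ (H.inv_mem hzH))
    (mem_filter.mpr ⟨hrz, hrzH⟩)
  rw [mul_inv_cancel_right] at hr'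
  exact notMem_of_mem_radSubgroup hs.one_notMem ((radSubgroup X).inv_mem hr)
    (mem_of_mem_filter _ hr')

end IsSeparatingGroup

/-- separating group: if a basic set `X` meets both `H` and its
complement and `H ≤ rad(X \ H)`, then `X = ⟨X⟩ \ rad(X)` and
`rad(X) ≤ H ⊓ ⟨X⟩`. -/
theorem stmt10 {G : Type*} [Group G] [Fintype G] (S : Finset (Finset G))
    (hS : IsSRing S) (X : Finset G) (hX : X ∈ S) (H : Subgroup G)
    (h1 : ∃ x ∈ X, x ∈ H) (h2 : ∃ x ∈ X, x ∉ H)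
    (h3 : ∀ h ∈ H, h ∈ radSubgroup (X.filter (fun x => x ∉ H))) :
    (X : Set G) = (Subgroup.closure (X : Set G) : Set G) \ (radSubgroup X : Set G) ∧
    radSubgroup X ≤ H ⊓ Subgroup.closure (X : Set G) := by
  have hs : IsSeparatingGroup S X H := ⟨hS, hX, h1, h2, h3⟩
  obtain ⟨z, hzX, -⟩ := h1
  refine ⟨Set.ext fun g => ⟨fun hg => ?_, fun ⟨hg, hgr⟩ => ?_⟩,
    fun r hr => ⟨hs.radSubgroup_le hr, mem_closure_of_mem_radSubgroup hzX hr⟩⟩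
  · exact ⟨Subgroup.subset_closure hg, fun hgr => notMem_of_mem_radSubgroup hs.one_notMem hgr hg⟩
  · rcases hs.mem_or_mem_of_mem_closure hg with hgX | hgH
    · exact hgX
    · by_contra hgX
      exact hgr (hs.mem_radSubgroup hgH hgX)
end
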